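/- arXiv:2303.02564 — 2 statements merged into one kernel-verified Lean document; each statement's English description precedes it below -/
import Mathlib

section
/- Let 0 < ε ≤ 1/N, N ≥ 4, σ > 0, β > 0, and define h = (σε/β)·ln((1 - 2(1-ε)(1/2 - 1/N)) / (1 - 2(1-ε)·1/2)) = (σε/β)·ln((ε + 2(1-ε)/N)/ε). Then for every α ∈ (0,1], h ≤ (σ/(βα))·3^α·ε^{1-α}·N^{-α}. -/
lemma log_le_rpow_div' {x α : ℝ} (hx : 0 < x) (hα : 0 < α) :
    Real.log x ≤ x ^ α / α := by
  have h1 : Real.log (x ^ α) ≤ x ^ α - 1 :=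
    Real.log_le_sub_one_of_pos (Real.rpow_pos_of_pos hx α)
  rw [Real.log_rpow hx] at h1
  rw [le_div_iff₀ hα]
  nlinarith

theorem last_mesh_step_bound (N : ℕ) (hN : 4 ≤ N) (ε σ β : ℝ)
    (hε : 0 < ε) (hεN : ε ≤ 1 / N) (hσ : 0 < σ) (hβ : 0 < β) :
    ∀ α : ℝ, α ∈ Set.Ioc (0:ℝ) 1 →
      (σ * ε / β) * Real.log ((ε + 2 * (1 - ε) / N) / ε) ≤
        (σ / (β * α)) * 3 ^ α * ε ^ (1 - α) * (N : ℝ) ^ (-α) := by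
  intro α hα
  obtain ⟨hα0, hα1⟩ := hα
  have hN0 : (0:ℝ) < N := by positivity
  have hN4 : (4:ℝ) ≤ N := by exact_mod_cast hN
  have hεN' : ε * N ≤ 1 := (le_div_iff₀ hN0).mp hεN
  have hε1 : ε ≤ 1 := by nlinarith
  have hnum : 0 < ε + 2 * (1 - ε) / N := by
    have h2 : 0 ≤ 2 * (1 - ε) / N := div_nonneg (by nlinarith) hN0.le
    linarith
  have hxpos : 0 < (ε + 2 * (1 - ε) / N) / ε := div_pos hnum hε
  have hx3 : (ε + 2 * (1 - ε) / N) / ε ≤ 3 / (ε * N) := by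
    rw [div_le_div_iff₀ hε (by positivity)]
    have hexp : (ε + 2 * (1 - ε) / N) * (ε * N) = ε * (ε * N) + 2 * (1 - ε) * ε := by
      field_simp
    rw [hexp]
    nlinarith [mul_le_mul_of_nonneg_left hεN' hε.le]
  have hlog : Real.log ((ε + 2 * (1 - ε) / N) / ε) ≤ (3 / (ε * N)) ^ α / α := by
    calc Real.log ((ε + 2 * (1 - ε) / N) / ε)
        ≤ ((ε + 2 * (1 - ε) / N) / ε) ^ α / α := log_le_rpow_div' hxpos hα0
      _ ≤ (3 / (ε * N)) ^ α / α := by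
          gcongr
  have key : (σ / (β * α)) * 3 ^ α * ε ^ (1 - α) * (N : ℝ) ^ (-α)
      = (σ * ε / β) * ((3 / (ε * N)) ^ α / α) := by
    rw [Real.div_rpow (by norm_num) (by positivity),
      Real.mul_rpow (le_of_lt hε) (le_of_lt hN0),
      Real.rpow_neg (le_of_lt hN0), Real.rpow_sub hε, Real.rpow_one]
    have h1 : ε ^ α ≠ 0 := ne_of_gt (Real.rpow_pos_of_pos hε α)
    have h2 : (N:ℝ) ^ α ≠ 0 := ne_of_gt (Real.rpow_pos_of_pos hN0 α)
    field_simp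
  rw [key]
  apply mul_le_mul_of_nonneg_left hlog (by positivity)
end

section
/- Let N ≥ 4 be even, 0 < ε ≤ 1/N, σ > 0, β > 0, and x_i = -(σε/β)·ln(1 - 2(1-ε)·i/N). Then for all 0 ≤ i ≤ N/2 - 2 and all μ with 0 ≤ μ ≤ σ, the inequality (x_{i+1} - x_i)^μ · exp(-β x_i / ε) ≤ C · ε^μ · N^{-μ} holds for some constant C depending only on σ, β, μ. -/
/-!
Write `x_s = -(σε/β) log a_s` with `a_s = 1 - 2(1-ε)s/N`, so that `exp(-β x_i/ε) = a_i^σ`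
and `x_{i+1} - x_i = (σε/β) log(a_i/a_{i+1})`. Since `a_i ≤ 1` and `μ ≤ σ`, the weight `a_i^σ` may be
replaced by `a_i^μ` and absorbed into the step. Now `a_i log(a_i/a_{i+1}) ≤ a_i (a_i - a_{i+1})/a_{i+1}`,
and away from the transition point (`i ≤ N/2 - 2`) one has `a_i ≤ 2 a_{i+1}`, so the weighted step is at
most `2(σε/β)(a_i - a_{i+1}) ≤ 4σε/(βN)`.
-/

open Real

namespace Bakhvalov

lemma mul_log_sub_log_le {a b : ℝ} (hb : 0 < b) (hba : b ≤ a) (hab : a ≤ 2 * b) :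
    a * (log a - log b) ≤ 2 * (a - b) := by
  have hlog : log a - log b ≤ (a - b) / b := by
    rw [← log_div (by linarith) hb.ne']
    calc log (a / b) ≤ a / b - 1 := log_le_sub_one_of_pos (div_pos (by linarith) hb)
      _ = (a - b) / b := by field_simp
  calc a * (log a - log b) ≤ a * ((a - b) / b) :=
        mul_le_mul_of_nonneg_left hlog (by linarith)
    _ = a / b * (a - b) := by ring
    _ ≤ 2 * (a - b) :=
        mul_le_mul_of_nonneg_right ((div_le_iff₀ hb).2 hab) (by linarith)

lemma rpow_mul_rpow_le_mul_rpow {x a μ σ : ℝ} (hx : 0 ≤ x) (ha : 0 < a) (ha1 : a ≤ 1)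
    (hμσ : μ ≤ σ) : x ^ μ * a ^ σ ≤ (x * a) ^ μ := by
  rw [mul_rpow hx ha.le]
  exact mul_le_mul_of_nonneg_left (rpow_le_rpow_of_exponent_ge ha ha1 hμσ) (rpow_nonneg hx μ)

lemma log_step_rpow_mul_rpow_le {a b c μ σ : ℝ} (hb : 0 < b) (hba : b ≤ a) (hab : a ≤ 2 * b)
    (ha1 : a ≤ 1) (hc : 0 ≤ c) (hμ : 0 ≤ μ) (hμσ : μ ≤ σ) :
    (c * (log a - log b)) ^ μ * a ^ σ ≤ (2 * c * (a - b)) ^ μ := by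
  have hstep : 0 ≤ c * (log a - log b) :=
    mul_nonneg hc (sub_nonneg.2 (log_le_log hb hba))
  calc (c * (log a - log b)) ^ μ * a ^ σ ≤ (c * (log a - log b) * a) ^ μ :=
        rpow_mul_rpow_le_mul_rpow hstep (by linarith) ha1 hμσ
    _ ≤ (2 * c * (a - b)) ^ μ := by
        refine rpow_le_rpow (mul_nonneg hstep (by linarith)) ?_ hμ
        linarith [mul_le_mul_of_nonneg_left (mul_log_sub_log_le hb hba hab) hc]

noncomputable def meshArg (ε N s : ℝ) : ℝ := 1 - 2 * (1 - ε) * s / N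

noncomputable def meshNode (σ β ε N s : ℝ) : ℝ := -(σ * ε / β) * log (meshArg ε N s)

section

variable {ε N s : ℝ}

lemma meshArg_sub_meshArg_succ : meshArg ε N s - meshArg ε N (s + 1) = 2 * (1 - ε) / N := by
  unfold meshArg; ring

lemma meshNode_succ_sub_meshNode (σ β : ℝ) :
    meshNode σ β ε N (s + 1) - meshNode σ β ε N s =
      σ * ε / β * (log (meshArg ε N s) - log (meshArg ε N (s + 1))) := by
  unfold meshNode; ring

lemma exp_neg_mul_meshNode_div {σ β : ℝ} (hβ : β ≠ 0) (hε : ε ≠ 0) (ha : 0 < meshArg ε N s) :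
    exp (-β * meshNode σ β ε N s / ε) = meshArg ε N s ^ σ := by
  rw [rpow_def_of_pos ha]
  congr 1
  unfold meshNode
  field_simp

lemma meshArg_le_one (hε1 : ε ≤ 1) (hN : 0 < N) (hs : 0 ≤ s) : meshArg ε N s ≤ 1 := by
  have : 0 ≤ 2 * (1 - ε) * s / N := by
    have := sub_nonneg.2 hε1
    positivity
  unfold meshArg; linarith

lemma meshArg_succ_le (hε1 : ε ≤ 1) (hN : 0 < N) (hsN : 2 * (s + 2) ≤ N) :
    ε + 2 * (1 - ε) / N ≤ meshArg ε N (s + 1) := by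
  have key : 2 * (1 - ε) * (s + 1) / N + 2 * (1 - ε) / N ≤ 1 - ε := by
    rw [← add_div, div_le_iff₀ hN]
    nlinarith
  unfold meshArg; linarith

end

end Bakhvalov

open Bakhvalov in
theorem weighted_mesh_step_bound (σ β μ : ℝ) (hσ : 0 < σ) (hβ : 0 < β)
    (hμ0 : 0 ≤ μ) (hμσ : μ ≤ σ) :
    ∃ C > (0:ℝ), ∀ N : ℕ, 4 ≤ N → Even N → ∀ ε : ℝ, 0 < ε → ε ≤ 1 / N →
      ∀ i : ℕ, i ≤ N / 2 - 2 →
        ((-(σ * ε / β) * Real.log (1 - 2 * (1 - ε) * (i + 1) / N)) -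
            (-(σ * ε / β) * Real.log (1 - 2 * (1 - ε) * i / N))) ^ μ *
          Real.exp (-β * (-(σ * ε / β) * Real.log (1 - 2 * (1 - ε) * i / N)) / ε) ≤
            C * ε ^ μ * (N : ℝ) ^ (-μ) := by
  refine ⟨(4 * σ / β) ^ μ, by positivity, ?_⟩
  intro N hN4 hNeven ε hε hεN i hi
  have hN4' : (4 : ℝ) ≤ N := by exact_mod_cast hN4
  have hN : (0 : ℝ) < N := by linarith
  have hε1 : ε ≤ 1 := hεN.trans ((div_le_one hN).2 (by linarith))
  have hiN : 2 * ((i : ℝ) + 2) ≤ N := by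
    obtain ⟨k, rfl⟩ := hNeven
    exact_mod_cast (by omega : 2 * (i + 2) ≤ k + k)
  have hgap : 0 ≤ 2 * (1 - ε) / N := div_nonneg (by linarith) hN.le
  have hb := meshArg_succ_le hε1 hN hiN
  have hdiff := meshArg_sub_meshArg_succ (ε := ε) (N := N) (s := i)
  show (meshNode σ β ε N (i + 1) - meshNode σ β ε N i) ^ μ *
      exp (-β * meshNode σ β ε N i / ε) ≤ _
  rw [meshNode_succ_sub_meshNode, exp_neg_mul_meshNode_div hβ.ne' hε.ne' (by linarith)]
  calc _ ≤ (2 * (σ * ε / β) * (meshArg ε N i - meshArg ε N (i + 1))) ^ μ :=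
        log_step_rpow_mul_rpow_le (by linarith) (by linarith) (by linarith)
          (meshArg_le_one hε1 hN i.cast_nonneg) (by positivity) hμ0 hμσ
    _ ≤ (4 * σ / β * ε * (N : ℝ)⁻¹) ^ μ := by
        rw [hdiff]
        refine rpow_le_rpow (by positivity) ?_ hμ0
        rw [show 2 * (σ * ε / β) * (2 * (1 - ε) / N) = 4 * σ / β * ε * (N : ℝ)⁻¹ * (1 - ε) by
          field_simp; ring]
        exact mul_le_of_le_one_right (by positivity) (by linarith)
    _ = (4 * σ / β) ^ μ * ε ^ μ * (N : ℝ) ^ (-μ) := by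
        rw [mul_rpow (by positivity) (by positivity), mul_rpow (by positivity) hε.le,
          inv_rpow hN.le, ← rpow_neg hN.le]
end
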